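/- Let (X, μ) be an atomless σ-finite non-zero measure space and N a Young–Orlicz function with J(N) < ∞, and let k₀[N] ∈ (1, ∞) be the unique solution of Q[N](k₀[N]) = 1. Then for every f ∈ wL(N) one has ‖f‖_{sL(N)} ≤ k₀[N] · ‖f‖_{wL(N)}. -/

import Mathlib

open MeasureTheory ENNReal Set Filter Topology

/-- A Young–Orlicz function: even, continuous, convex, non-negative, strictly increasing to
infinity on `[0, ∞)`, with `N u / u → 0` as `u → 0⁺` and `N u / u → ∞` as `u → ∞`. -/
structure IsYoungOrlicz (N : ℝ → ℝ) : Prop where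
  even : ∀ u, N (-u) = N u
  continuous : Continuous N
  convexOn : ConvexOn ℝ Set.univ N
  nonneg : ∀ u, 0 ≤ N u
  strictMonoOn : StrictMonoOn N (Set.Ici 0)
  tendsto_atTop : Filter.Tendsto N Filter.atTop Filter.atTop
  tendsto_div_zero : Filter.Tendsto (fun u => N u / u) (nhdsWithin 0 (Set.Ioi 0)) (nhds 0)
  tendsto_div_atTop : Filter.Tendsto (fun u => N u / u) Filter.atTop Filter.atTop

/-- A measure is atomless if every set of positive measure has a measurable subset of strictly
smaller positive measure. -/
def Atomless {X : Type*} [MeasurableSpace X] (μ : MeasureTheory.Measure X) : Prop :=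
  ∀ s : Set X, MeasurableSet s → 0 < μ s →
    ∃ t : Set X, MeasurableSet t ∧ t ⊆ s ∧ 0 < μ t ∧ μ t < μ s

/-- The tail function `T[f](t) = μ {x : |f x| ≥ t}`. -/
noncomputable def tailFun {X : Type*} [MeasurableSpace X] (μ : MeasureTheory.Measure X)
    (f : X → ℝ) (t : ℝ) : ℝ≥0∞ :=
  μ {x | t ≤ |f x|}

/-- `V[N](t) = min (μ X) (1 / N t)` (computed in `ℝ≥0∞`, so `1/0 = ∞`). -/
noncomputable def Vfun {X : Type*} [MeasurableSpace X] (μ : MeasureTheory.Measure X)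
    (N : ℝ → ℝ) (t : ℝ) : ℝ≥0∞ :=
  min (μ Set.univ) (ENNReal.ofReal (N t))⁻¹

/-- The strong (Luxemburg) Orlicz norm, with value `∞` when `f ∉ sL(N)`. -/
noncomputable def strongNorm {X : Type*} [MeasurableSpace X] (μ : MeasureTheory.Measure X)
    (N : ℝ → ℝ) (f : X → ℝ) : ℝ≥0∞ :=
  sInf (ENNReal.ofReal ''
    {k : ℝ | 0 < k ∧ ∫⁻ x, ENNReal.ofReal (N (|f x| / k)) ∂μ ≤ 1})

/-- The weak Orlicz (tail) norm `‖f‖_{wL(N)} = inf {K > 0 : ∀ t > 0, T[f](t) ≤ V[N](t/K)}`,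
with value `∞` when `f ∉ wL(N)`. -/
noncomputable def weakNorm {X : Type*} [MeasurableSpace X] (μ : MeasureTheory.Measure X)
    (N : ℝ → ℝ) (f : X → ℝ) : ℝ≥0∞ :=
  sInf (ENNReal.ofReal ''
    {K : ℝ | 0 < K ∧ ∀ t > 0, tailFun μ f t ≤ Vfun μ N (t / K)})

/-- `Y(N) = sup { ‖f‖_{sL(N)} / ‖f‖_{wL(N)} : f ∈ wL(N), f ≠ 0 }`. -/
noncomputable def Ynorm {X : Type*} [MeasurableSpace X] (μ : MeasureTheory.Measure X)
    (N : ℝ → ℝ) : ℝ≥0∞ :=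
  ⨆ (f : X → ℝ) (_ : Measurable f) (_ : ¬ f =ᵐ[μ] (0 : X → ℝ))
    (_ : weakNorm μ N f ≠ ⊤), strongNorm μ N f / weakNorm μ N f

/-- The (generalized) inverse of a Young–Orlicz function on `[0, ∞)`. -/
noncomputable def Ninv (N : ℝ → ℝ) (w : ℝ) : ℝ :=
  sInf {u : ℝ | 0 ≤ u ∧ w ≤ N u}

/-- `Q[N](k) = ∫_{y₀}^∞ N(y/k) |d(1/N(y))| = ∫_{1/μ(X)}^∞ N(N⁻¹(w)/k) w⁻² dw`. -/
noncomputable def Qfun {X : Type*} [MeasurableSpace X] (μ : MeasureTheory.Measure X)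
    (N : ℝ → ℝ) (k : ℝ) : ℝ≥0∞ :=
  ∫⁻ w in Set.Ioi ((μ Set.univ)⁻¹.toReal), ENNReal.ofReal (N (Ninv N w / k) / w ^ 2)

/-- `G(α) = ∫₀^{1/2} (1 - z)⁻² z^{-α} dz`. -/
noncomputable def Gfun (α : ℝ) : ℝ≥0∞ :=
  ∫⁻ z in Set.Ioo (0 : ℝ) (1/2), ENNReal.ofReal ((1 - z) ^ (-(2:ℝ)) * z ^ (-α))

/-!
If `K` is admissible for the weak norm, the layer-cake formula and the tail bound
`μ {|f| ≥ t} ≤ V(t / K)` give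
`∫ N(|f| / (k₀ K)) dμ = ∫₀^∞ μ {|f| ≥ k₀ K N⁻¹(s)} ds ≤ ∫₀^∞ V(k₀ N⁻¹(s)) ds`.
Writing both `V(k₀ N⁻¹(s)) = ∫_{w > max(N(k₀ N⁻¹(s)), 1/μ(X))} w⁻² dw` and
`N(N⁻¹(w) / k₀) = |{s > 0 : N(k₀ N⁻¹(s)) < w}|`, Tonelli identifies the last integral with
`Q(k₀) = 1`, so `k₀ K` is admissible for the Luxemburg norm.
-/

namespace IsYoungOrlicz

variable {N : ℝ → ℝ}

lemma map_zero (hN : IsYoungOrlicz N) : N 0 = 0 := by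
  have hlim : Tendsto (fun u => N u / u * u) (𝓝[>] 0) (𝓝 0) := by
    simpa using hN.tendsto_div_zero.mul (tendsto_id.mono_left nhdsWithin_le_nhds)
  refine tendsto_nhds_unique ((hN.continuous.tendsto 0).mono_left nhdsWithin_le_nhds)
    (hlim.congr' ?_)
  filter_upwards [self_mem_nhdsWithin] with u hu using div_mul_cancel₀ _ (ne_of_gt hu)

lemma pos (hN : IsYoungOrlicz N) {u : ℝ} (hu : 0 < u) : 0 < N u :=
  hN.map_zero ▸ hN.strictMonoOn self_mem_Ici hu.le hu

lemma nonempty_Ninv_set (hN : IsYoungOrlicz N) (w : ℝ) :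
    {u : ℝ | 0 ≤ u ∧ w ≤ N u}.Nonempty :=
  ((eventually_ge_atTop 0).and (hN.tendsto_atTop.eventually_ge_atTop w)).exists

lemma Ninv_nonneg (hN : IsYoungOrlicz N) (w : ℝ) : 0 ≤ Ninv N w :=
  le_csInf (hN.nonempty_Ninv_set w) fun _ hu => hu.1

lemma map_Ninv (hN : IsYoungOrlicz N) {w : ℝ} (hw : 0 ≤ w) : N (Ninv N w) = w := by
  have hbdd : BddBelow {u : ℝ | 0 ≤ u ∧ w ≤ N u} := ⟨0, fun _ hu => hu.1⟩
  have hmem : Ninv N w ∈ {u : ℝ | 0 ≤ u ∧ w ≤ N u} :=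
    ((isClosed_le continuous_const continuous_id).inter
      (isClosed_le continuous_const hN.continuous)).csInf_mem (hN.nonempty_Ninv_set w) hbdd
  obtain ⟨b, hb, hwb⟩ := hN.nonempty_Ninv_set w
  obtain ⟨u, hu, rfl⟩ := intermediate_value_Icc hb hN.continuous.continuousOn
    (⟨hN.map_zero.symm ▸ hw, hwb⟩ : w ∈ Icc (N 0) (N b))
  exact le_antisymm (hN.strictMonoOn.monotoneOn hmem.1 hu.1 (csInf_le hbdd ⟨hu.1, le_rfl⟩))
    hmem.2

lemma Ninv_le_iff (hN : IsYoungOrlicz N) {w a : ℝ} (hw : 0 ≤ w) (ha : 0 ≤ a) :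
    Ninv N w ≤ a ↔ w ≤ N a := by
  rw [← hN.strictMonoOn.le_iff_le (hN.Ninv_nonneg w) ha, hN.map_Ninv hw]

lemma le_Ninv_iff (hN : IsYoungOrlicz N) {w a : ℝ} (hw : 0 ≤ w) (ha : 0 ≤ a) :
    a ≤ Ninv N w ↔ N a ≤ w := by
  rw [← hN.strictMonoOn.le_iff_le ha (hN.Ninv_nonneg w), hN.map_Ninv hw]

lemma Ninv_lt_iff (hN : IsYoungOrlicz N) {w a : ℝ} (hw : 0 ≤ w) (ha : 0 ≤ a) :
    Ninv N w < a ↔ w < N a :=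
  lt_iff_lt_of_le_iff_le (hN.le_Ninv_iff hw ha)

lemma lt_Ninv_iff (hN : IsYoungOrlicz N) {w a : ℝ} (hw : 0 ≤ w) (ha : 0 ≤ a) :
    a < Ninv N w ↔ N a < w :=
  lt_iff_lt_of_le_iff_le (hN.Ninv_le_iff hw ha)

lemma Ninv_pos (hN : IsYoungOrlicz N) {w : ℝ} (hw : 0 < w) : 0 < Ninv N w := by
  rwa [hN.lt_Ninv_iff hw.le le_rfl, hN.map_zero]

lemma monotone_Ninv (hN : IsYoungOrlicz N) : Monotone (Ninv N) := fun _ _ h =>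
  csInf_le_csInf ⟨0, fun _ hu => hu.1⟩ (hN.nonempty_Ninv_set _) fun _ hu => ⟨hu.1, h.trans hu.2⟩

lemma map_mul_Ninv_lt_iff (hN : IsYoungOrlicz N) {k s w : ℝ} (hk : 0 < k) (hs : 0 ≤ s)
    (hw : 0 ≤ w) : N (k * Ninv N s) < w ↔ s < N (Ninv N w / k) := by
  rw [← hN.lt_Ninv_iff hw (mul_nonneg hk.le (hN.Ninv_nonneg s)), ← lt_div_iff₀' hk,
    hN.Ninv_lt_iff hs (div_nonneg (hN.Ninv_nonneg w) hk.le)]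

end IsYoungOrlicz

lemma lintegral_Ioi_inv_sq {a : ℝ} (ha : 0 < a) :
    ∫⁻ w in Ioi a, ENNReal.ofReal (w ^ 2)⁻¹ = ENNReal.ofReal a⁻¹ := by
  have hrpow : EqOn (fun w : ℝ => ENNReal.ofReal (w ^ 2)⁻¹)
      (fun w => ENNReal.ofReal (w ^ (-2 : ℝ))) (Ioi a) := fun w hw => by
    simp only [Real.rpow_neg (ha.trans hw).le, Real.rpow_two]
  rw [setLIntegral_congr_fun measurableSet_Ioi hrpow,
    ← ofReal_integral_eq_lintegral_ofReal (integrableOn_Ioi_rpow_of_lt (by norm_num) ha)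
      ((ae_restrict_iff' measurableSet_Ioi).2 (ae_of_all _ fun w hw =>
        Real.rpow_nonneg (ha.trans hw).le _)),
    integral_Ioi_rpow_of_lt (by norm_num) ha]
  norm_num [Real.rpow_neg_one]

section Vfun

variable {X : Type*} [MeasurableSpace X] {μ : Measure X} {N : ℝ → ℝ}

lemma measurable_Vfun (hN : Continuous N) : Measurable (Vfun μ N) :=
  measurable_const.min (ENNReal.measurable_ofReal.comp hN.measurable).inv

lemma Vfun_eq_ofReal_inv_max (hμ : μ ≠ 0) {t : ℝ} (ht : 0 < N t) :
    Vfun μ N t = ENNReal.ofReal (max (N t) (μ univ)⁻¹.toReal)⁻¹ := by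
  rw [ENNReal.ofReal_inv_of_pos (lt_max_of_lt_left ht), ENNReal.ofReal_max,
    ofReal_toReal (inv_ne_top.2 (Measure.measure_univ_ne_zero.2 hμ)),
    Antitone.map_max fun _ _ h => ENNReal.inv_le_inv.2 h, inv_inv, Vfun, min_comm]

lemma lintegral_Vfun_mul_Ninv (hμ : μ ≠ 0) (hN : IsYoungOrlicz N) {k : ℝ} (hk : 0 < k) :
    ∫⁻ s in Ioi 0, Vfun μ N (k * Ninv N s) = Qfun μ N k := by
  set c := (μ univ)⁻¹.toReal
  let F : ℝ → ℝ → ℝ≥0∞ := fun s =>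
    (Ioi (N (k * Ninv N s))).indicator fun w => ENNReal.ofReal (w ^ 2)⁻¹
  have hF : Measurable (Function.uncurry F) :=
    Measurable.ite (measurableSet_lt (hN.continuous.measurable.comp
      ((hN.monotone_Ninv.measurable.const_mul k).comp measurable_fst)) measurable_snd)
      (ENNReal.measurable_ofReal.comp (measurable_snd.pow_const 2).inv) measurable_const
  have slice_w : ∀ s ∈ Ioi (0 : ℝ), ∫⁻ w in Ioi c, F s w = Vfun μ N (k * Ninv N s) := by
    intro s hs
    have hm : 0 < N (k * Ninv N s) := hN.pos (mul_pos hk (hN.Ninv_pos hs))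
    rw [lintegral_indicator measurableSet_Ioi, Measure.restrict_restrict measurableSet_Ioi,
      Ioi_inter_Ioi, lintegral_Ioi_inv_sq (lt_max_of_lt_left hm), Vfun_eq_ofReal_inv_max hμ hm]
  have slice_s : ∀ w ∈ Ioi c, ∫⁻ s in Ioi 0, F s w =
      ENNReal.ofReal (N (Ninv N w / k) / w ^ 2) := by
    intro w hw
    have hw0 : 0 < w := ENNReal.toReal_nonneg.trans_lt hw
    calc ∫⁻ s in Ioi 0, F s w
        = ∫⁻ s in Ioi 0, (Iio (N (Ninv N w / k))).indicator
            (fun _ => ENNReal.ofReal (w ^ 2)⁻¹) s :=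
          setLIntegral_congr_fun measurableSet_Ioi fun s hs => by
            simp only [F, indicator, mem_Ioi, mem_Iio,
              hN.map_mul_Ninv_lt_iff hk (le_of_lt hs) hw0.le]
      _ = ENNReal.ofReal (N (Ninv N w / k) / w ^ 2) := by
        rw [lintegral_indicator measurableSet_Iio, Measure.restrict_restrict measurableSet_Iio,
          setLIntegral_const, Iio_inter_Ioi, Real.volume_Ioo, sub_zero,
          ← ENNReal.ofReal_mul (by positivity), inv_mul_eq_div]
  calc ∫⁻ s in Ioi 0, Vfun μ N (k * Ninv N s)
      = ∫⁻ s in Ioi 0, ∫⁻ w in Ioi c, F s w :=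
        (setLIntegral_congr_fun measurableSet_Ioi slice_w).symm
    _ = ∫⁻ w in Ioi c, ∫⁻ s in Ioi 0, F s w := lintegral_lintegral_swap hF.aemeasurable
    _ = Qfun μ N k := setLIntegral_congr_fun measurableSet_Ioi slice_s

lemma lintegral_N_div_le_lintegral_Vfun (hN : IsYoungOrlicz N) {f : X → ℝ} (hf : Measurable f)
    {k K : ℝ} (hk : 0 < k) (hK : 0 < K) (htail : ∀ t > 0, tailFun μ f t ≤ Vfun μ N (t / K)) :
    ∫⁻ x, ENNReal.ofReal (N (|f x| / (k * K))) ∂μ ≤ ∫⁻ s in Ioi 0, Vfun μ N (k * Ninv N s) := by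
  rw [lintegral_eq_lintegral_meas_le μ (ae_of_all _ fun _ => hN.nonneg _)
    (hN.continuous.measurable.comp (hf.abs.div_const _)).aemeasurable]
  refine setLIntegral_mono ((measurable_Vfun hN.continuous).comp
    (hN.monotone_Ninv.measurable.const_mul k)) fun s hs => ?_
  have hlevel : {x | s ≤ N (|f x| / (k * K))} = {x | k * K * Ninv N s ≤ |f x|} := by
    ext x
    exact (hN.Ninv_le_iff (le_of_lt hs) (by positivity)).symm.trans
      (le_div_iff₀' (mul_pos hk hK))
  calc μ {x | s ≤ N (|f x| / (k * K))} = tailFun μ f (k * K * Ninv N s) := by rw [hlevel]; rfl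
    _ ≤ Vfun μ N (k * K * Ninv N s / K) :=
      htail _ (mul_pos (mul_pos hk hK) (hN.Ninv_pos hs))
    _ = Vfun μ N (k * Ninv N s) := by rw [mul_right_comm, mul_div_cancel_right₀ _ hK.ne']

lemma strongNorm_le_ofReal {f : X → ℝ} {k : ℝ} (hk : 0 < k)
    (h : ∫⁻ x, ENNReal.ofReal (N (|f x| / k)) ∂μ ≤ 1) : strongNorm μ N f ≤ ENNReal.ofReal k :=
  sInf_le ⟨k, ⟨hk, h⟩, rfl⟩

end Vfun

lemma ENNReal.le_ofReal_mul_sInf_image_ofReal {a : ℝ≥0∞} {c : ℝ} {S : Set ℝ} (hc : 0 < c)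
    (h : ∀ K ∈ S, a ≤ ENNReal.ofReal (c * K)) :
    a ≤ ENNReal.ofReal c * sInf (ENNReal.ofReal '' S) := by
  have hc₀ : ENNReal.ofReal c ≠ 0 := ENNReal.ofReal_ne_zero_iff.2 hc
  rw [sInf_image, ENNReal.mul_iInf_of_ne hc₀ ofReal_ne_top]
  refine le_iInf fun K => ?_
  rw [ENNReal.mul_iInf_of_ne hc₀ ofReal_ne_top]
  exact le_iInf fun hK => ENNReal.ofReal_mul hc.le ▸ h K hK

theorem strongNorm_le_kZero_mul_weakNorm_general
    {X : Type*} [MeasurableSpace X] (μ : MeasureTheory.Measure X)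
    (hμ0 : μ ≠ 0)
    (N : ℝ → ℝ) (hN : IsYoungOrlicz N)
    (k₀ : ℝ) (hk₀ : 1 < k₀) (hQ : Qfun μ N k₀ = 1)
    (f : X → ℝ) (hf : Measurable f) :
    strongNorm μ N f ≤ ENNReal.ofReal k₀ * weakNorm μ N f := by
  have hk₀pos : 0 < k₀ := one_pos.trans hk₀
  refine ENNReal.le_ofReal_mul_sInf_image_ofReal hk₀pos fun K ⟨hK, htail⟩ =>
    strongNorm_le_ofReal (mul_pos hk₀pos hK) ?_
  calc ∫⁻ x, ENNReal.ofReal (N (|f x| / (k₀ * K))) ∂μ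
      ≤ ∫⁻ s in Ioi 0, Vfun μ N (k₀ * Ninv N s) :=
        lintegral_N_div_le_lintegral_Vfun hN hf hk₀pos hK htail
    _ = 1 := (lintegral_Vfun_mul_Ninv hμ0 hN hk₀pos).trans hQ

theorem strongNorm_le_kZero_mul_weakNorm
    {X : Type*} [MeasurableSpace X] (μ : MeasureTheory.Measure X) [SigmaFinite μ]
    (hμ0 : μ ≠ 0) (hatomless : Atomless μ)
    (N : ℝ → ℝ) (hN : IsYoungOrlicz N)
    (ν : MeasureTheory.Measure ℝ)
    (hν : ∀ t : ℝ, 0 < t → ν (Set.Ioi t) = Vfun μ N t)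
    (hJ : ∃ C : ℝ, 0 < C ∧ ∫⁻ t in Set.Ioi (0:ℝ), ENNReal.ofReal (N (C * t)) ∂ν < ⊤)
    (k₀ : ℝ) (hk₀ : 1 < k₀) (hQ : Qfun μ N k₀ = 1)
    (f : X → ℝ) (hf : Measurable f) (hw : weakNorm μ N f ≠ ⊤) :
    strongNorm μ N f ≤ ENNReal.ofReal k₀ * weakNorm μ N f :=
  strongNorm_le_kZero_mul_weakNorm_general μ hμ0 N hN k₀ hk₀ hQ f hf
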